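/- If 𝒮₁ and 𝒮₂ are two sign assignments on Rect° related by a gauge function g : 𝐒(G) → {±1}, i.e. 𝒮₂(r) = g(x)·g(y)·𝒮₁(r) for every r ∈ Rect°(x, y), then the map Φ : (C(G), ∂_{𝒮₁}) → (C(G), ∂_{𝒮₂}) defined by Φ(x) = g(x)·x is an isomorphism of chain complexes; in particular the homologies are isomorphic. -/
import Mathlib


attribute [local instance] Classical.propDecidable

/-- The cyclic interval `[a, b)` in `ℤ/n`: the classes `a, a+1, …, b-1`. -/
noncomputable def cycInt (n : ℕ) (a b : ZMod n) : Finset (ZMod n) :=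
  (Finset.range ((b - a).val)).image fun k => a + (k : ZMod n)

/-- The strict cyclic interval `(a, b)` in `ℤ/n`: the classes `a+1, …, b-1`. -/
noncomputable def cycIntStrict (n : ℕ) (a b : ZMod n) : Finset (ZMod n) :=
  (Finset.Ioo 0 ((b - a).val)).image fun k => a + (k : ZMod n)

/-- A rectangle on the torus from the generator `x` to the generator `y` (generators
being viewed as bijections from vertical circles to horizontal circles): it is
determined by an ordered pair of distinct columns `(a, b)` such that `y` is obtained
from `x` by transposing the values at `a` and `b`.  The rectangle spans the columns in
the cyclic interval `[a, b)` and the rows in the cyclic interval `[x a, x b)`, so that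
its horizontal boundary arcs run from `x` to `y`. -/
def GridRect (n : ℕ) (x y : Equiv.Perm (ZMod n)) : Type :=
  {ab : ZMod n × ZMod n // ab.1 ≠ ab.2 ∧ y = x * Equiv.swap ab.1 ab.2}

namespace GridRect

variable {n : ℕ} {x y : Equiv.Perm (ZMod n)}

def a (r : GridRect n x y) : ZMod n := r.1.1
def b (r : GridRect n x y) : ZMod n := r.1.2

/-- The set of cells (labelled by their south-west corners) of the rectangle. -/
noncomputable def cells (r : GridRect n x y) : Finset (ZMod n × ZMod n) :=
  (cycInt n r.a r.b) ×ˢ (cycInt n (x r.a) (x r.b))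

/-- The rectangle is empty: no component of `x` lies in its interior. -/
def IsEmptyRect (r : GridRect n x y) : Prop :=
  ∀ c : ZMod n, ¬ (c ∈ cycIntStrict n r.a r.b ∧ x c ∈ cycIntStrict n (x r.a) (x r.b))

/-- The domain (two-chain) underlying the rectangle, as a multiplicity function on
cells. -/
noncomputable def domain (r : GridRect n x y) : ZMod n × ZMod n → ℕ :=
  fun c => if c ∈ r.cells then 1 else 0

end GridRect

noncomputable instance {n : ℕ} [NeZero n] (x y : Equiv.Perm (ZMod n)) :
    Fintype (GridRect n x y) := by
  unfold GridRect; infer_instance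

/-- A (true) sign assignment on the empty rectangles of a toroidal grid of size `n`
(Definition of Manolescu–Ozsváth–Szabó–Thurston):
(i) whenever two distinct decompositions of the same domain as a composite of two empty
rectangles exist, the products of the signs are opposite;
(ii) a composite which is a vertical annulus of width one has sign product `-1`;
(iii) a composite which is a horizontal annulus of height one has sign product `+1`. -/
structure SignAssignment (n : ℕ) where
  sgn : ∀ x y : Equiv.Perm (ZMod n), GridRect n x y → ℤ
  sgn_units : ∀ x y r, sgn x y r = 1 ∨ sgn x y r = -1
  comp_rel : ∀ (x y y' z : Equiv.Perm (ZMod n))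
      (r₁ : GridRect n x y) (r₂ : GridRect n y z)
      (r₁' : GridRect n x y') (r₂' : GridRect n y' z),
      r₁.IsEmptyRect → r₂.IsEmptyRect → r₁'.IsEmptyRect → r₂'.IsEmptyRect →
      ¬ (y = y' ∧ HEq r₁ r₁' ∧ HEq r₂ r₂') →
      (∀ c, r₁.domain c + r₂.domain c = r₁'.domain c + r₂'.domain c) →
      sgn x y r₁ * sgn y z r₂ = -(sgn x y' r₁' * sgn y' z r₂')
  vert : ∀ (x y : Equiv.Perm (ZMod n)) (r₁ : GridRect n x y) (r₂ : GridRect n y x),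
      r₁.IsEmptyRect → r₂.IsEmptyRect →
      (∃ a : ZMod n, ∀ c : ZMod n × ZMod n,
        r₁.domain c + r₂.domain c = if c.1 = a then 1 else 0) →
      sgn x y r₁ * sgn y x r₂ = -1
  horiz : ∀ (x y : Equiv.Perm (ZMod n)) (r₁ : GridRect n x y) (r₂ : GridRect n y x),
      r₁.IsEmptyRect → r₂.IsEmptyRect →
      (∃ b : ZMod n, ∀ c : ZMod n × ZMod n,
        r₁.domain c + r₂.domain c = if c.2 = b then 1 else 0) →
      sgn x y r₁ * sgn y x r₂ = 1

/-- The signed boundary map over ℤ: it counts, with signs, the empty rectangles whose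
interiors avoid the set of markings `X`. -/
noncomputable def bndS (n : ℕ) [NeZero n] (S : SignAssignment n)
    (X : Finset (ZMod n × ZMod n)) :
    (Equiv.Perm (ZMod n) →₀ ℤ) →ₗ[ℤ] (Equiv.Perm (ZMod n) →₀ ℤ) :=
  Finsupp.lsum ℤ fun x => LinearMap.toSpanSingleton ℤ _
    (∑ y : Equiv.Perm (ZMod n),
      ∑ r : {r : GridRect n x y // r.IsEmptyRect ∧ ∀ c ∈ X, r.domain c = 0},
        S.sgn x y r.1 • Finsupp.single y (1 : ℤ))

/-- The gauge transformation `Φ(x) = g(x) · x` on the free ℤ-module generated by the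
grid generators. -/
noncomputable def gaugeMap (n : ℕ) (g : Equiv.Perm (ZMod n) → ℤ) :
    (Equiv.Perm (ZMod n) →₀ ℤ) →ₗ[ℤ] (Equiv.Perm (ZMod n) →₀ ℤ) :=
  Finsupp.lsum ℤ fun x => LinearMap.toSpanSingleton ℤ _ (Finsupp.single x (g x))

/-- if two sign assignments `𝒮₁` and `𝒮₂` are related by a gauge function
`g : 𝐒(G) → {±1}`, i.e. `𝒮₂(r) = g(x) · g(y) · 𝒮₁(r)` for `r ∈ Rect°(x, y)`, then
`Φ(x) = g(x) · x` is an isomorphism of chain complexes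
`(C(G), ∂_{𝒮₁}) → (C(G), ∂_{𝒮₂})`. -/
theorem stmt_8 (n : ℕ) [NeZero n] (S₁ S₂ : SignAssignment n)
    (X : Finset (ZMod n × ZMod n))
    (g : Equiv.Perm (ZMod n) → ℤ)
    (hg : ∀ x, g x = 1 ∨ g x = -1)
    (hrel : ∀ (x y : Equiv.Perm (ZMod n)) (r : GridRect n x y),
      S₂.sgn x y r = g x * g y * S₁.sgn x y r) :
    gaugeMap n g ∘ₗ bndS n S₁ X = bndS n S₂ X ∘ₗ gaugeMap n g ∧
    Function.Bijective (gaugeMap n g) := by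
  have hg2 : ∀ x, g x * g x = 1 := by
    intro x; rcases hg x with h | h <;> simp [h]
  constructor
  · apply Finsupp.lhom_ext
    intro x c
    simp only [LinearMap.comp_apply, bndS, gaugeMap, Finsupp.lsum_single,
      LinearMap.toSpanSingleton_apply]
    rw [map_smul, map_smul]
    congr 1
    rw [Finsupp.lsum_single, LinearMap.toSpanSingleton_apply, Finset.smul_sum, map_sum]
    refine Finset.sum_congr rfl fun y _ => ?_
    rw [Finset.smul_sum, map_sum]
    refine Finset.sum_congr rfl fun r _ => ?_
    simp only [map_smul, Finsupp.lsum_single, LinearMap.toSpanSingleton_apply,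
      one_smul, hrel, smul_smul]
    rw [Finsupp.smul_single, Finsupp.smul_single]
    congr 1
    rcases hg x with h | h <;> rcases hg y with h' | h' <;> simp [h, h']
  · have hinv : (gaugeMap n g) ∘ₗ (gaugeMap n g) = LinearMap.id := by
      apply Finsupp.lhom_ext
      have h1 : ∀ (x : Equiv.Perm (ZMod n)) (c : ℤ),
          gaugeMap n g (Finsupp.single x c) = Finsupp.single x (c * g x) := by
        intro x c
        simp [gaugeMap, Finsupp.smul_single, smul_eq_mul]
      intro x c
      rw [LinearMap.comp_apply, h1, h1, LinearMap.id_apply, mul_assoc, hg2, mul_one]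
    constructor
    · intro a b h
      have := congrArg (gaugeMap n g) h
      rw [← LinearMap.comp_apply, ← LinearMap.comp_apply, hinv] at this
      simpa using this
    · intro b
      exact ⟨gaugeMap n g b, by rw [← LinearMap.comp_apply, hinv]; rfl⟩
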